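/- arXiv:1007.4127 — 2 statements merged into one kernel-verified Lean document; each statement's English description precedes it below -/
import Mathlib

section
/- Let α̃₁ = e₃ + e₄, α̃₂ = e₂ − e₃, α̃₃ = ½(e₁ − e₂ + e₃ − e₄), and α̃₄ = ¼(−3e₁ − e₂ − e₃ + e₄) + (1/(2√2))(e₅ − e₇) in ℝ⁷ with the standard inner product ⟨·,·⟩, and for a nonzero vector α set α^∨ = 2α/⟨α,α⟩. Then the 4×4 matrix a with entries a_{ij} = ⟨α̃_i, α̃_j^∨⟩ equals the matrix [[2,−1,0,0],[−1,2,−2,0],[0,−1,2,−1],[0,0,−1,2]], i.e., the Cartan matrix of type F₄. -/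
noncomputable section

/-- The standard inner product on ℝ⁷. -/
def ip7 (x y : Fin 7 → ℝ) : ℝ := ∑ i, x i * y i

/-- The coroot `α^∨ = 2α/⟨α,α⟩` of a vector `α` in ℝ⁷. -/
def coroot7 (v : Fin 7 → ℝ) : Fin 7 → ℝ := (2 / ip7 v v) • v

/-- The simple roots `α̃₁ = e₃+e₄`, `α̃₂ = e₂−e₃`, `α̃₃ = ½(e₁−e₂+e₃−e₄)`,
`α̃₄ = ¼(−3e₁−e₂−e₃+e₄) + (1/(2√2))(e₅−e₇)` of the folded subalgebra f₄ of e₇. -/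
def f4root : Fin 4 → (Fin 7 → ℝ) :=
  ![![0, 0, 1, 1, 0, 0, 0],
    ![0, 1, -1, 0, 0, 0, 0],
    ![1/2, -1/2, 1/2, -1/2, 0, 0, 0],
    ![-3/4, -1/4, -1/4, 1/4, 1/(2*Real.sqrt 2), 0, -(1/(2*Real.sqrt 2))]]

lemma hco (x y : Fin 7 → ℝ) : ip7 x (coroot7 y) = 2 / ip7 y y * ip7 x y := by
  simp only [coroot7, ip7, Pi.smul_apply, smul_eq_mul, Finset.mul_sum]
  exact Finset.sum_congr rfl fun i _ => by ring

lemma hip : ∀ i j, ip7 (f4root i) (f4root j) =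
    !![(2:ℝ), -1, 0, 0; -1, 2, -1, 0; 0, -1, 1, -1/2; 0, 0, -1/2, 1] i j := by
  have h : Real.sqrt 2 * Real.sqrt 2 = 2 := Real.mul_self_sqrt (by norm_num)
  have hs : Real.sqrt 2 ≠ 0 := by positivity
  intro i j
  fin_cases i <;> fin_cases j <;>
    · simp [ip7, f4root, Fin.sum_univ_succ, Fin.sum_univ_zero, Matrix.vecHead,
        Matrix.vecTail]
      try field_simp
      try nlinarith [h]

/-- the matrix `a_{ij} = ⟨α̃_i, α̃_j^∨⟩` is the Cartan matrix of type F₄. -/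
theorem stmt_1 :
    (Matrix.of fun i j : Fin 4 => ip7 (f4root i) (coroot7 (f4root j))) =
      !![2, -1, 0, 0;
         -1, 2, -2, 0;
         0, -1, 2, -1;
         0, 0, -1, 2] := by
  ext i j
  rw [Matrix.of_apply, hco, hip, hip]
  fin_cases i <;> fin_cases j <;> norm_num

end
end

section
/- Let n ≥ 3 be odd and let q be the 2n×2n antidiagonal matrix (q_{jk} = 1 iff j + k = 2n+1), with so(2n,ℂ) = {Z ∈ gl(2n,ℂ) : Z q + q Zᵀ = 0}. Let σ be the permutation of {1,…,2n} with σ(1) = n, σ(n) = 2n, σ(n+1) = 1, σ(2n) = n+1, and σ(j) = n+j, σ(n+j) = j for 2 ≤ j ≤ n−1, and let Λ be the permutation matrix with Λ e_j = e_{σ(j)}. Then Λᵀ q Λ = q, Λ⁴ = Id, conjugation Z ↦ Λ Z Λ⁻¹ maps so(2n,ℂ) to itself and has order exactly 4 on so(2n,ℂ), and its eigenspaces in so(2n,ℂ) for the eigenvalues 1, i, −1, −i have ℂ-dimensions n² − 3n + 3, 2n − 2, (n−1)², and 2n − 2 respectively. -/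
open Matrix

noncomputable section

/-- The antidiagonal symmetric form `q` of order `2n` (`q_{jk} = 1` iff `j+k = 2n+1`,
1-based). -/
def qD2 (n : ℕ) : Matrix (Fin (2*n)) (Fin (2*n)) ℂ :=
  Matrix.of fun i j => if (i : ℕ) + (j : ℕ) + 1 = 2*n then 1 else 0

/-- The permutation `σ` of `{1,…,2n}` (1-based) with `σ(1) = n`, `σ(n) = 2n`,
`σ(n+1) = 1`, `σ(2n) = n+1`, and `σ(j) = n+j`, `σ(n+j) = j` for `2 ≤ j ≤ n−1`. -/
def sigmaD (n : ℕ) (j : ℕ) : ℕ :=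
  if j = 1 then n
  else if j = n then 2*n
  else if j = n+1 then 1
  else if j = 2*n then n+1
  else if j ≤ n then n + j
  else j - n

/-- The permutation matrix `Λ` with `Λ e_j = e_{σ(j)}`, i.e. `Λ_{σ(j),j} = 1`. -/
def LamD2 (n : ℕ) : Matrix (Fin (2*n)) (Fin (2*n)) ℂ :=
  Matrix.of fun i j => if (i : ℕ) + 1 = sigmaD n ((j : ℕ) + 1) then 1 else 0

/-- The orthogonal Lie algebra `so(2n,ℂ) = {Z : Z q + q Zᵀ = 0}`. -/
def soD2 (n : ℕ) : Set (Matrix (Fin (2*n)) (Fin (2*n)) ℂ) :=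
  {Z | Z * qD2 n + qD2 n * Zᵀ = 0}

/-- The eigenspace of conjugation by `Λ` in so(2n,ℂ) for the eigenvalue `μ`. -/
def eigD (n : ℕ) (μ : ℂ) : Submodule ℂ (Matrix (Fin (2*n)) (Fin (2*n)) ℂ) where
  carrier := {Z | (Z * qD2 n + qD2 n * Zᵀ = 0) ∧ LamD2 n * Z * (LamD2 n)⁻¹ = μ • Z}
  add_mem' := by
    rintro a b ⟨ha1, ha2⟩ ⟨hb1, hb2⟩
    constructor
    · rw [Matrix.add_mul, Matrix.transpose_add, Matrix.mul_add, add_add_add_comm, ha1, hb1,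
        add_zero]
    · rw [Matrix.mul_add, Matrix.add_mul, ha2, hb2, smul_add]
  zero_mem' := by simp
  smul_mem' := by
    rintro c a ⟨ha1, ha2⟩
    constructor
    · rw [Matrix.transpose_smul, Matrix.smul_mul, Matrix.mul_smul, ← smul_add, ha1,
        smul_zero]
    · rw [Matrix.mul_smul, Matrix.smul_mul, ha2]
      exact smul_comm _ _ _

/-!
`Λ` is the permutation matrix of `σ`, a permutation of order four without fixed points that
commutes with the reversal `j ↦ 2n + 1 - j` (whose permutation matrix is `q`), and whose square
fixes all but the four points `1, n, n + 1, 2n`. Hence `Λ` is orthogonal and commutes with `q`,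
so conjugation `L` by `Λ` commutes with the involution `B Z = -(q Zᵀ q)`, whose fixed space is
`so(2n)`. The `μ`-eigenspace of `L` in `so(2n)` is the range of the product of the commuting
projections `(1 + B) / 2` and `(1/4) ∑ μ⁻ᵏ Lᵏ`, so its dimension is the trace of that product.
Since `Z ↦ A Z B` has trace `tr A · tr B` and `Z ↦ A Zᵀ B` has trace `tr (A Bᵀ)`, this trace is
`(1/8) ∑ₖ μ⁻ᵏ (tr (Λᵏ)² - tr (Λ²ᵏ))`, and `tr Λᵏ = 2n, 0, 2n - 4, 0` for `k = 0, 1, 2, 3`.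
-/

open Finset Equiv

theorem LinearMap.IsProj.mul_of_commute {R M : Type*} [Semiring R] [AddCommMonoid M]
    [Module R M] {p q : Submodule R M} {f g : M →ₗ[R] M} (hf : IsProj p f) (hg : IsProj q g)
    (hfg : Commute f g) : IsProj (p ⊓ q) (f * g) where
  map_mem x := ⟨hf.map_mem _, by rw [hfg.eq]; exact hg.map_mem _⟩
  map_id x hx := by rw [Module.End.mul_apply, hg.map_id x hx.2, hf.map_id x hx.1]

namespace Module.End

variable {K V : Type*} [Field K] [AddCommGroup V] [Module K V]

def eigenAverage (f : End K V) (N : ℕ) (μ : K) : End K V :=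
  (N : K)⁻¹ • ∑ k ∈ range N, μ⁻¹ ^ k • f ^ k

theorem mul_sum_inv_pow_smul_pow {f : End K V} {N : ℕ} {μ : K} (hf : f ^ N = 1)
    (hμ : μ ^ N = 1) :
    f * ∑ k ∈ range N, μ⁻¹ ^ k • f ^ k = μ • ∑ k ∈ range N, μ⁻¹ ^ k • f ^ k := by
  obtain rfl | hN := eq_or_ne N 0
  · simp
  have hμ0 : μ ≠ 0 := by rintro rfl; simp [zero_pow hN] at hμ
  set g : ℕ → End K V := fun k => μ⁻¹ ^ k • f ^ k
  have hshift : ∑ k ∈ range N, g (k + 1) = ∑ k ∈ range N, g k := by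
    have hgN : g N = g 0 := by simp [g, hf, inv_pow, hμ]
    have h := (sum_range_succ' g N).symm.trans (sum_range_succ g N)
    rwa [hgN, add_left_inj] at h
  calc f * ∑ k ∈ range N, g k = μ • ∑ k ∈ range N, g (k + 1) := by
        simp only [g, mul_sum, smul_sum, mul_smul_comm, smul_smul, ← pow_succ']
        congr! 2 with k
        rw [pow_succ', ← mul_assoc, mul_inv_cancel₀ hμ0, one_mul]
    _ = μ • ∑ k ∈ range N, g k := by rw [hshift]

theorem pow_apply_of_mem_eigenspace {f : End K V} {μ : K} {x : V} (hx : x ∈ f.eigenspace μ)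
    (k : ℕ) : (f ^ k) x = μ ^ k • x := by
  induction k with
  | zero => simp
  | succ k ih => rw [pow_succ', mul_apply, ih, map_smul, mem_eigenspace_iff.mp hx, smul_smul,
      pow_succ]

theorem isProj_eigenAverage {f : End K V} {N : ℕ} {μ : K} (hf : f ^ N = 1) (hμ : μ ^ N = 1)
    (hN : (N : K) ≠ 0) : LinearMap.IsProj (f.eigenspace μ) (f.eigenAverage N μ) where
  map_mem x := by
    rw [mem_eigenspace_iff, eigenAverage, ← mul_apply, mul_smul_comm,
      mul_sum_inv_pow_smul_pow hf hμ, smul_comm]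
    rfl
  map_id x hx := by
    have hμ0 : μ ≠ 0 := by
      rintro rfl
      exact hN (by simp_all [zero_pow_eq_one₀])
    simp only [eigenAverage, LinearMap.smul_apply, LinearMap.sum_apply,
      pow_apply_of_mem_eigenspace hx, smul_smul, ← mul_pow, inv_mul_cancel₀ hμ0, one_pow,
      one_smul, sum_const, card_range]
    rw [← Nat.cast_smul_eq_nsmul K, smul_smul, inv_mul_cancel₀ hN, one_smul]

theorem finrank_eigenspace_inf_eigenspace [FiniteDimensional K V] {f g : End K V} {M N : ℕ}
    {μ ν : K} (hfg : Commute f g) (hg : g ^ M = 1) (hf : f ^ N = 1) (hν : ν ^ M = 1)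
    (hμ : μ ^ N = 1) (hM : (M : K) ≠ 0) (hN : (N : K) ≠ 0) :
    (Module.finrank K ↥(g.eigenspace ν ⊓ f.eigenspace μ) : K) =
      LinearMap.trace K V (g.eigenAverage M ν * f.eigenAverage N μ) := by
  have hcomm : Commute (g.eigenAverage M ν) (f.eigenAverage N μ) :=
    ((Commute.sum_left _ _ _ fun j _ => Commute.sum_right _ _ _ fun k _ =>
      ((hfg.symm.pow_pow j k).smul_left _).smul_right _).smul_left _).smul_right _
  exact (((isProj_eigenAverage hg hν hM).mul_of_commute
    (isProj_eigenAverage hf hμ hN) hcomm).trace).symm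

end Module.End

namespace Matrix

variable {m : Type*} [Fintype m] [DecidableEq m]

section CommRing

variable {R : Type*} [CommRing R]

theorem trace_end_eq_sum_single (f : Module.End R (Matrix m m R)) :
    LinearMap.trace R _ f = ∑ p : m × m, f (single p.1 p.2 1) p.1 p.2 := by
  rw [LinearMap.trace_eq_matrix_trace R (stdBasis R m m), Matrix.trace]
  refine Finset.sum_congr rfl fun p _ => ?_
  rw [diag_apply, LinearMap.toMatrix_apply, stdBasis_eq_single]
  simp [stdBasis, Module.Basis.repr_reindex]

theorem trace_mulLeftRight (A B : Matrix m m R) :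
    LinearMap.trace R _ (LinearMap.mulLeftRight R (A, B)) = A.trace * B.trace := by
  simp [trace_end_eq_sum_single, Matrix.trace, Matrix.mul_apply, single, ite_and,
    Finset.sum_mul_sum, Fintype.sum_prod_type]

theorem trace_mulLeftRight_mul_transpose (A B : Matrix m m R) :
    LinearMap.trace R _
        (LinearMap.mulLeftRight R (A, B) * (transposeLinearEquiv m m R R).toLinearMap) =
      (A * Bᵀ).trace := by
  simp [trace_end_eq_sum_single, Matrix.trace, Matrix.mul_apply, single, ite_and,
    Fintype.sum_prod_type]

def soInvolution (Q : Matrix m m R) : Module.End R (Matrix m m R) :=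
  -(LinearMap.mulLeftRight R (Q, Q) * (transposeLinearEquiv m m R R).toLinearMap)

def orthogonalConj (P : Matrix m m R) : Module.End R (Matrix m m R) :=
  LinearMap.mulLeftRight R (P, Pᵀ)

@[simp]
theorem soInvolution_apply (Q Z : Matrix m m R) : soInvolution Q Z = -(Q * Zᵀ * Q) := rfl

@[simp]
theorem orthogonalConj_apply (P Z : Matrix m m R) : orthogonalConj P Z = P * Z * Pᵀ := rfl

theorem orthogonalConj_pow (P : Matrix m m R) (k : ℕ) :
    orthogonalConj P ^ k = orthogonalConj (P ^ k) := by
  induction k with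
  | zero => ext Z : 1; simp
  | succ k ih =>
    ext Z : 1
    simp [pow_succ, ih, Module.End.mul_apply, transpose_mul, Matrix.mul_assoc]

variable {P Q : Matrix m m R}

theorem soInvolution_eq_self_iff (hQ : Q * Q = 1) (Z : Matrix m m R) :
    soInvolution Q Z = Z ↔ Z * Q + Q * Zᵀ = 0 := by
  rw [soInvolution_apply, neg_eq_iff_eq_neg, ← add_eq_zero_iff_eq_neg']
  constructor <;> intro h <;> simpa [add_mul, Matrix.mul_assoc, hQ] using congrArg (· * Q) h

theorem soInvolution_sq (hQ : Q * Q = 1) (hQt : Qᵀ = Q) : soInvolution Q ^ 2 = 1 := by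
  ext Z : 1
  simp [sq, hQt, transpose_mul, Matrix.mul_assoc, ← Matrix.mul_assoc Q Q, hQ]

theorem commute_soInvolution_orthogonalConj (hQt : Qᵀ = Q) (hPQ : Commute Q P) :
    Commute (soInvolution Q) (orthogonalConj P) := by
  have hPtQ : Q * Pᵀ = Pᵀ * Q := by simpa [hQt] using (congrArg transpose hPQ.eq).symm
  ext Z : 1
  simp only [Module.End.mul_apply, soInvolution_apply, orthogonalConj_apply, transpose_mul,
    transpose_transpose, Matrix.mul_neg, Matrix.neg_mul, neg_inj]
  calc Q * (P * (Zᵀ * Pᵀ)) * Q = (Q * P) * Zᵀ * (Pᵀ * Q) := by simp only [Matrix.mul_assoc]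
    _ = (P * Q) * Zᵀ * (Q * Pᵀ) := by rw [hPQ.eq, hPtQ]
    _ = P * (Q * Zᵀ * Q) * Pᵀ := by simp only [Matrix.mul_assoc]

theorem trace_orthogonalConj (P : Matrix m m R) :
    LinearMap.trace R _ (orthogonalConj P) = P.trace ^ 2 := by
  rw [orthogonalConj, trace_mulLeftRight, trace_transpose, sq]

theorem trace_soInvolution_mul_orthogonalConj (hQ : Q * Q = 1) (hQt : Qᵀ = Q)
    (hPQ : Commute Q P) :
    LinearMap.trace R _ (soInvolution Q * orthogonalConj P) = -(P * P).trace := by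
  have h : soInvolution Q * orthogonalConj P =
      -(LinearMap.mulLeftRight R (Q * P, Pᵀ * Q) *
        (transposeLinearEquiv m m R R).toLinearMap) := by
    ext Z : 1
    simp [Module.End.mul_apply, transpose_mul, Matrix.mul_assoc]
  rw [h, map_neg, trace_mulLeftRight_mul_transpose, transpose_mul, transpose_transpose, hQt,
    Matrix.mul_assoc, ← Matrix.mul_assoc P, ← hPQ.eq, ← Matrix.mul_assoc, ← Matrix.mul_assoc,
    hQ, Matrix.one_mul]

theorem orthogonalConj_one : orthogonalConj (1 : Matrix m m R) = 1 := by
  ext Z : 1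
  simp

end CommRing

open Module.End in
theorem finrank_soInvolution_inf_orthogonalConj {K : Type*} [Field K] [CharZero K]
    {P Q : Matrix m m K} {μ : K} (hQ : Q * Q = 1) (hQt : Qᵀ = Q) (hPQ : Commute Q P)
    (hP : P ^ 4 = 1) (hμ : μ ^ 4 = 1) :
    (Module.finrank K ↥((soInvolution Q).eigenspace 1 ⊓ (orthogonalConj P).eigenspace μ) : K) =
      8⁻¹ * ∑ k ∈ range 4, μ⁻¹ ^ k * ((P ^ k).trace ^ 2 - (P ^ k * P ^ k).trace) := by
  have hL : orthogonalConj P ^ 4 = 1 := by rw [orthogonalConj_pow, hP, orthogonalConj_one]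
  rw [finrank_eigenspace_inf_eigenspace (commute_soInvolution_orthogonalConj hQt hPQ).symm
    (soInvolution_sq hQ hQt) hL (one_pow 2) hμ (by norm_num) (by norm_num)]
  have hB : (soInvolution Q).eigenAverage 2 1 = (2 : K)⁻¹ • (1 + soInvolution Q) := by
    simp [eigenAverage, sum_range_succ]
  rw [hB, eigenAverage, smul_mul_smul_comm, map_smul, add_mul, one_mul, mul_sum,
    ← sum_add_distrib, map_sum, smul_eq_mul]
  simp only [mul_smul_comm, ← smul_add, map_smul, map_add, smul_eq_mul, orthogonalConj_pow,
    trace_orthogonalConj, trace_soInvolution_mul_orthogonalConj hQ hQt (hPQ.pow_right _)]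
  norm_num [mul_sum, sub_eq_add_neg, mul_assoc]

section Permutation

variable {R : Type*}

theorem commute_permMatrix [NonAssocSemiring R] {σ τ : Perm m} (h : Commute σ τ) :
    Commute (σ.permMatrix R) (τ.permMatrix R) := by
  rw [commute_iff_eq, ← permMatrix_mul, ← permMatrix_mul, h.eq]

theorem transpose_permMatrix_mul_self [NonAssocSemiring R] (σ : Perm m) :
    (σ.permMatrix R)ᵀ * σ.permMatrix R = 1 := by
  rw [transpose_permMatrix, ← permMatrix_mul, mul_inv_cancel, permMatrix_one]

theorem trace_permMatrix_inv [AddCommMonoidWithOne R] (σ : Perm m) :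
    ((σ⁻¹).permMatrix R).trace = (Function.fixedPoints σ).ncard := by
  rw [← transpose_permMatrix, trace_transpose, trace_permutation]

theorem apply_eq_of_commute_permMatrix_diagonal [NonAssocSemiring R] {σ : Perm m} {d : m → R}
    (h : Commute (σ.permMatrix R) (diagonal d)) (i : m) : d (σ i) = d i := by
  have h' := congrFun (congrFun h.eq i) (σ i)
  rwa [PEquiv.toMatrix_toPEquiv_mul, PEquiv.mul_toMatrix_toPEquiv, submatrix_apply,
    submatrix_apply, id, id, symm_apply_apply, diagonal_apply_eq, diagonal_apply_eq] at h'

end Permutation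

end Matrix

theorem Fin.revPerm_mul_self {k : ℕ} : (Fin.revPerm : Perm (Fin k)) * Fin.revPerm = 1 := by
  ext i
  simp

section Sigma

variable {n : ℕ}

theorem sigmaD_le {j : ℕ} (h : j ≤ 2 * n) : sigmaD n j ≤ 2 * n := by
  unfold sigmaD; split_ifs <;> omega

theorem sigmaD_cases {j : ℕ} (hn : 2 ≤ n) (h1 : 1 ≤ j) (h2 : j ≤ 2 * n) :
    j = 1 ∧ sigmaD n j = n ∨ j = n ∧ sigmaD n j = 2 * n ∨ j = n + 1 ∧ sigmaD n j = 1 ∨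
    j = 2 * n ∧ sigmaD n j = n + 1 ∨ (2 ≤ j ∧ j < n ∧ sigmaD n j = n + j) ∨
    (n + 1 < j ∧ j < 2 * n ∧ sigmaD n j = j - n) := by
  unfold sigmaD; split_ifs <;> omega

theorem sigmaD_sigmaD_cases {j : ℕ} (hn : 2 ≤ n) (h1 : 1 ≤ j) (h2 : j ≤ 2 * n) :
    j = 1 ∧ sigmaD n (sigmaD n j) = 2 * n ∨ j = 2 * n ∧ sigmaD n (sigmaD n j) = 1 ∨
    j = n ∧ sigmaD n (sigmaD n j) = n + 1 ∨ j = n + 1 ∧ sigmaD n (sigmaD n j) = n ∨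
    (j ≠ 1 ∧ j ≠ 2 * n ∧ j ≠ n ∧ j ≠ n + 1 ∧ sigmaD n (sigmaD n j) = j) := by
  rcases sigmaD_cases hn h1 h2 with h | h | h | h | h | h <;>
  rcases sigmaD_cases hn (j := sigmaD n j) (by omega) (by omega)
    with h' | h' | h' | h' | h' | h' <;>
  omega

/-- `σ`, transported to the 0-based indices of `Fin (2 * n)`. -/
def sigmaFin (n : ℕ) (i : Fin (2 * n)) : Fin (2 * n) :=
  ⟨sigmaD n (i + 1) - 1, by
    have := i.isLt
    have := sigmaD_le (n := n) (j := i + 1) (by omega)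
    omega⟩

theorem sigmaFin_val (hn : 2 ≤ n) (i : Fin (2 * n)) :
    (sigmaFin n i : ℕ) + 1 = sigmaD n (i + 1) := by
  have := sigmaD_cases hn (j := i + 1) (by omega) (by omega)
  simp only [sigmaFin]
  omega

theorem sigmaFin_sigmaFin_val (hn : 2 ≤ n) (i : Fin (2 * n)) :
    (sigmaFin n (sigmaFin n i) : ℕ) + 1 = sigmaD n (sigmaD n (i + 1)) := by
  rw [sigmaFin_val hn, sigmaFin_val hn]

theorem sigmaFin_sigmaFin_sigmaFin_sigmaFin (hn : 2 ≤ n) (i : Fin (2 * n)) :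
    sigmaFin n (sigmaFin n (sigmaFin n (sigmaFin n i))) = i := by
  have h := sigmaFin_sigmaFin_val hn (sigmaFin n (sigmaFin n i))
  rw [sigmaFin_sigmaFin_val hn i] at h
  ext
  rcases sigmaD_sigmaD_cases hn (j := i + 1) (by omega) (by omega) with h' | h' | h' | h' | h' <;>
  rcases sigmaD_sigmaD_cases hn (j := sigmaD n (sigmaD n (i + 1))) (by omega) (by omega)
    with h'' | h'' | h'' | h'' | h'' <;>
  omega

def sigmaPerm (hn : 2 ≤ n) : Perm (Fin (2 * n)) where
  toFun := sigmaFin n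
  invFun i := sigmaFin n (sigmaFin n (sigmaFin n i))
  left_inv := sigmaFin_sigmaFin_sigmaFin_sigmaFin hn
  right_inv := sigmaFin_sigmaFin_sigmaFin_sigmaFin hn

theorem sigmaPerm_val (hn : 2 ≤ n) (i : Fin (2 * n)) :
    (sigmaPerm hn i : ℕ) + 1 = sigmaD n (i + 1) :=
  sigmaFin_val hn i

theorem sigmaPerm_sq_val (hn : 2 ≤ n) (i : Fin (2 * n)) :
    ((sigmaPerm hn ^ 2) i : ℕ) + 1 = sigmaD n (sigmaD n (i + 1)) :=
  sigmaFin_sigmaFin_val hn i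

theorem sigmaPerm_pow_four (hn : 2 ≤ n) : sigmaPerm hn ^ 4 = 1 :=
  Equiv.ext (sigmaFin_sigmaFin_sigmaFin_sigmaFin hn)

theorem sigmaPerm_rev (hn : 2 ≤ n) (i : Fin (2 * n)) :
    sigmaPerm hn i.rev = (sigmaPerm hn i).rev := by
  have h := sigmaPerm_val hn i
  have h' := sigmaPerm_val hn i.rev
  rw [Fin.val_rev] at h'
  ext
  rw [Fin.val_rev]
  rcases sigmaD_cases hn (j := i + 1) (by omega) (by omega) with h₁ | h₁ | h₁ | h₁ | h₁ | h₁ <;>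
  rcases sigmaD_cases hn (j := 2 * n - (i + 1) + 1) (by omega) (by omega)
    with h₂ | h₂ | h₂ | h₂ | h₂ | h₂ <;>
  omega

theorem fixedPoints_sigmaPerm (hn : 2 ≤ n) : Function.fixedPoints (sigmaPerm hn) = ∅ := by
  ext i
  have h := sigmaPerm_val hn i
  simp only [Function.mem_fixedPoints, Function.IsFixedPt, Set.mem_empty_iff_false, iff_false,
    Fin.ext_iff]
  rcases sigmaD_cases hn (j := i + 1) (by omega) (by omega) with h' | h' | h' | h' | h' | h' <;>
  omega

theorem fixedPoints_sigmaPerm_sq (hn : 2 ≤ n) :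
    Function.fixedPoints ⇑(sigmaPerm hn ^ 2) =
      ↑({⟨0, by omega⟩, ⟨n - 1, by omega⟩, ⟨n, by omega⟩, ⟨2 * n - 1, by omega⟩} :
        Finset (Fin (2 * n)))ᶜ := by
  ext i
  have h := sigmaPerm_sq_val hn i
  simp only [Function.mem_fixedPoints, Function.IsFixedPt, Finset.coe_compl, Set.mem_compl_iff,
    Finset.coe_insert, Finset.coe_singleton, Set.mem_insert_iff, Set.mem_singleton_iff,
    Fin.ext_iff]
  rcases sigmaD_sigmaD_cases hn (j := i + 1) (by omega) (by omega) with h' | h' | h' | h' | h' <;>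
  omega

theorem ncard_fixedPoints_sigmaPerm_sq (hn : 2 ≤ n) :
    (Function.fixedPoints ⇑(sigmaPerm hn ^ 2)).ncard = 2 * n - 4 := by
  rw [fixedPoints_sigmaPerm_sq, Set.ncard_coe_finset, Finset.card_compl, Fintype.card_fin]
  congr 1
  rw [Finset.card_insert_of_notMem, Finset.card_insert_of_notMem, Finset.card_pair] <;>
  simp [Fin.ext_iff] <;> omega

theorem sigmaPerm_sq_zero (hn : 2 ≤ n) :
    (sigmaPerm hn ^ 2) ⟨0, by omega⟩ = ⟨2 * n - 1, by omega⟩ := by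
  have h : ((sigmaPerm hn ^ 2) ⟨0, by omega⟩ : ℕ) + 1 = sigmaD n (sigmaD n 1) :=
    sigmaPerm_sq_val hn _
  apply Fin.ext
  show _ = 2 * n - 1
  rcases sigmaD_sigmaD_cases hn (j := 1) (by omega) (by omega) with h' | h' | h' | h' | h' <;>
  omega

end Sigma

section Matrices

variable {n : ℕ}

theorem qD2_eq_permMatrix : qD2 n = (Fin.revPerm : Perm (Fin (2 * n))).permMatrix ℂ := by
  ext i j
  simp only [qD2, of_apply, PEquiv.toMatrix_apply, toPEquiv_apply, Option.mem_def,
    Option.some.injEq, Fin.revPerm_apply, Fin.ext_iff, Fin.val_rev]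
  congr 1
  apply propext
  omega

theorem LamD2_eq_permMatrix (hn : 2 ≤ n) : LamD2 n = ((sigmaPerm hn)⁻¹).permMatrix ℂ := by
  ext i j
  have h := sigmaPerm_val hn j
  simp only [LamD2, of_apply, PEquiv.toMatrix_apply, toPEquiv_apply, Option.mem_def,
    Option.some.injEq, Perm.inv_eq_iff_eq, Fin.ext_iff]
  congr 1
  apply propext
  omega

theorem qD2_mul_self : qD2 n * qD2 n = 1 := by
  rw [qD2_eq_permMatrix, ← permMatrix_mul, Fin.revPerm_mul_self, permMatrix_one]

theorem transpose_qD2 : (qD2 n)ᵀ = qD2 n := by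
  rw [qD2_eq_permMatrix, transpose_permMatrix, Perm.inv_def, Fin.revPerm_symm]

theorem commute_qD2_LamD2 (hn : 2 ≤ n) : Commute (qD2 n) (LamD2 n) := by
  have h : Commute Fin.revPerm (sigmaPerm hn) :=
    Equiv.ext fun i => (sigmaPerm_rev hn i).symm
  rw [qD2_eq_permMatrix, LamD2_eq_permMatrix hn]
  exact commute_permMatrix h.inv_right

theorem transpose_LamD2_mul_self (hn : 2 ≤ n) : (LamD2 n)ᵀ * LamD2 n = 1 := by
  rw [LamD2_eq_permMatrix hn, transpose_permMatrix_mul_self]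

theorem inv_LamD2 (hn : 2 ≤ n) : (LamD2 n)⁻¹ = (LamD2 n)ᵀ :=
  inv_eq_left_inv (transpose_LamD2_mul_self hn)

theorem LamD2_pow (hn : 2 ≤ n) (k : ℕ) :
    LamD2 n ^ k = ((sigmaPerm hn ^ k)⁻¹).permMatrix ℂ := by
  rw [LamD2_eq_permMatrix hn, ← permMatrixHom_apply, ← map_pow, permMatrixHom_apply]

theorem LamD2_pow_four (hn : 2 ≤ n) : LamD2 n ^ 4 = 1 := by
  rw [LamD2_pow hn, sigmaPerm_pow_four, inv_one, permMatrix_one]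

theorem trace_LamD2 (hn : 2 ≤ n) : (LamD2 n).trace = 0 := by
  rw [← pow_one (LamD2 n), LamD2_pow hn, pow_one, trace_permMatrix_inv,
    fixedPoints_sigmaPerm hn, Set.ncard_empty, Nat.cast_zero]

theorem trace_LamD2_sq (hn : 2 ≤ n) : (LamD2 n ^ 2).trace = 2 * n - 4 := by
  rw [LamD2_pow hn, trace_permMatrix_inv, ncard_fixedPoints_sigmaPerm_sq hn,
    Nat.cast_sub (by omega)]
  push_cast
  ring

theorem LamD2_pow_three (hn : 2 ≤ n) : LamD2 n ^ 3 = (LamD2 n)ᵀ := by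
  rw [← Matrix.one_mul (LamD2 n ^ 3), ← transpose_LamD2_mul_self hn, Matrix.mul_assoc,
    ← pow_succ', LamD2_pow_four hn, Matrix.mul_one]

end Matrices

section Eigenspaces

variable {n : ℕ}

theorem mem_soD2_iff {Z : Matrix (Fin (2 * n)) (Fin (2 * n)) ℂ} :
    Z ∈ soD2 n ↔ soInvolution (qD2 n) Z = Z :=
  (soInvolution_eq_self_iff qD2_mul_self Z).symm

theorem conj_mem_soD2 (hn : 2 ≤ n) {Z : Matrix (Fin (2 * n)) (Fin (2 * n)) ℂ}
    (hZ : Z ∈ soD2 n) : LamD2 n * Z * (LamD2 n)⁻¹ ∈ soD2 n := by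
  have h := (commute_soInvolution_orthogonalConj transpose_qD2 (commute_qD2_LamD2 hn)).eq
  rw [mem_soD2_iff] at hZ ⊢
  rw [inv_LamD2 hn, ← orthogonalConj_apply, ← Module.End.mul_apply, h, Module.End.mul_apply, hZ]

theorem exists_mem_soD2_not_commute (hn : 2 ≤ n) :
    ∃ Z ∈ soD2 n, LamD2 n ^ 2 * Z ≠ Z * LamD2 n ^ 2 := by
  let d : Fin (2 * n) → ℂ := fun i =>
    if (i : ℕ) = 0 then 1 else if (i : ℕ) = 2 * n - 1 then -1 else 0
  refine ⟨diagonal d, ?_, fun h => ?_⟩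
  · show diagonal d * qD2 n + qD2 n * (diagonal d)ᵀ = 0
    ext i j
    have := i.isLt
    have := j.isLt
    simp only [diagonal_transpose, diagonal_mul, mul_diagonal, qD2, of_apply, Matrix.add_apply,
      Matrix.zero_apply, d]
    split_ifs <;> first | (exfalso; omega) | norm_num
  · -- `Λ²` swaps the first and the last basis vector, on which `d` takes the values `1` and `-1`
    rw [LamD2_pow hn] at h
    have h' := apply_eq_of_commute_permMatrix_diagonal h ((sigmaPerm hn ^ 2) ⟨0, by omega⟩)
    rw [Perm.inv_eq_iff_eq.mpr rfl, sigmaPerm_sq_zero hn] at h'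
    have h1 : (1 : ℂ) = -1 := by simpa [d, show 2 * n - 1 ≠ 0 by omega] using h'
    norm_num at h1

theorem eigD_eq (hn : 2 ≤ n) (μ : ℂ) :
    eigD n μ =
      (soInvolution (qD2 n)).eigenspace 1 ⊓ (orthogonalConj (LamD2 n)).eigenspace μ := by
  ext Z
  rw [Submodule.mem_inf, Module.End.mem_eigenspace_iff, Module.End.mem_eigenspace_iff, one_smul,
    soInvolution_eq_self_iff qD2_mul_self, orthogonalConj_apply, ← inv_LamD2 hn]
  rfl

theorem finrank_eigD (hn : 2 ≤ n) {μ : ℂ} (hμ : μ ^ 4 = 1) :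
    (Module.finrank ℂ (eigD n μ) : ℂ) =
      8⁻¹ * ((2 * n) ^ 2 - 2 * n - μ⁻¹ * (2 * n - 4) + μ⁻¹ ^ 2 * ((2 * n - 4) ^ 2 - 2 * n)
        - μ⁻¹ ^ 3 * (2 * n - 4)) := by
  rw [eigD_eq hn, finrank_soInvolution_inf_orthogonalConj qD2_mul_self transpose_qD2
    (commute_qD2_LamD2 hn) (LamD2_pow_four hn) hμ]
  have h6 : LamD2 n ^ 6 = LamD2 n ^ 2 := by
    rw [show 6 = 4 + 2 from rfl, pow_add, LamD2_pow_four hn, Matrix.one_mul]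
  simp only [← pow_add, Finset.sum_range_succ, Finset.sum_range_zero]
  norm_num [LamD2_pow_four hn, h6, trace_LamD2 hn, trace_LamD2_sq hn, LamD2_pow_three hn]
  ring

theorem finrank_eigD_one (hn : 3 ≤ n) : Module.finrank ℂ (eigD n 1) = n ^ 2 - 3 * n + 3 := by
  apply Nat.cast_injective (R := ℂ)
  rw [finrank_eigD (by omega) (one_pow 4)]
  push_cast [Nat.cast_sub (by nlinarith : 3 * n ≤ n ^ 2)]
  ring

theorem finrank_eigD_neg_one (hn : 2 ≤ n) : Module.finrank ℂ (eigD n (-1)) = (n - 1) ^ 2 := by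
  apply Nat.cast_injective (R := ℂ)
  rw [finrank_eigD hn (by norm_num)]
  push_cast [Nat.cast_sub (by omega : 1 ≤ n)]
  ring

theorem finrank_eigD_I (hn : 2 ≤ n) : Module.finrank ℂ (eigD n Complex.I) = 2 * n - 2 := by
  apply Nat.cast_injective (R := ℂ)
  rw [finrank_eigD hn Complex.I_pow_four, Complex.inv_I]
  push_cast [Nat.cast_sub (by omega : 2 ≤ 2 * n)]
  ring_nf
  simp only [Complex.I_sq, Complex.I_pow_three]
  ring

theorem finrank_eigD_neg_I (hn : 2 ≤ n) : Module.finrank ℂ (eigD n (-Complex.I)) = 2 * n - 2 := by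
  apply Nat.cast_injective (R := ℂ)
  rw [finrank_eigD hn (by rw [neg_pow, Complex.I_pow_four]; norm_num), inv_neg, Complex.inv_I,
    neg_neg]
  push_cast [Nat.cast_sub (by omega : 2 ≤ 2 * n)]
  ring_nf
  simp only [Complex.I_sq, Complex.I_pow_three]
  ring

end Eigenspaces

theorem stmt_14_general (n : ℕ) (hn : 3 ≤ n) :
    (LamD2 n)ᵀ * qD2 n * LamD2 n = qD2 n ∧
    LamD2 n ^ 4 = 1 ∧
    (∀ Z ∈ soD2 n, LamD2 n * Z * (LamD2 n)⁻¹ ∈ soD2 n) ∧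
    (∃ Z ∈ soD2 n, LamD2 n ^ 2 * Z ≠ Z * LamD2 n ^ 2) ∧
    Module.finrank ℂ (eigD n 1) = n^2 - 3*n + 3 ∧
    Module.finrank ℂ (eigD n Complex.I) = 2*n - 2 ∧
    Module.finrank ℂ (eigD n (-1)) = (n-1)^2 ∧
    Module.finrank ℂ (eigD n (-Complex.I)) = 2*n - 2 := by
  have hn2 : 2 ≤ n := by omega
  refine ⟨?_, LamD2_pow_four hn2, fun Z => conj_mem_soD2 hn2, exists_mem_soD2_not_commute hn2,
    finrank_eigD_one hn, finrank_eigD_I hn2, finrank_eigD_neg_one hn2, finrank_eigD_neg_I hn2⟩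
  rw [Matrix.mul_assoc, (commute_qD2_LamD2 hn2).eq, ← Matrix.mul_assoc,
    transpose_LamD2_mul_self hn2, Matrix.one_mul]

/-- for odd `n ≥ 3`, the permutation matrix `Λ` preserves the form `q`, has
`Λ⁴ = Id`, conjugation by `Λ` preserves so(2n,ℂ) and has order exactly 4 on it, and its
eigenspaces in so(2n,ℂ) for the eigenvalues `1, i, −1, −i` have dimensions
`n²−3n+3`, `2n−2`, `(n−1)²`, `2n−2` respectively. -/
theorem stmt_14 (n : ℕ) (hn : 3 ≤ n) (hodd : Odd n) :
    (LamD2 n)ᵀ * qD2 n * LamD2 n = qD2 n ∧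
    LamD2 n ^ 4 = 1 ∧
    (∀ Z ∈ soD2 n, LamD2 n * Z * (LamD2 n)⁻¹ ∈ soD2 n) ∧
    (∃ Z ∈ soD2 n, LamD2 n ^ 2 * Z ≠ Z * LamD2 n ^ 2) ∧
    Module.finrank ℂ (eigD n 1) = n^2 - 3*n + 3 ∧
    Module.finrank ℂ (eigD n Complex.I) = 2*n - 2 ∧
    Module.finrank ℂ (eigD n (-1)) = (n-1)^2 ∧
    Module.finrank ℂ (eigD n (-Complex.I)) = 2*n - 2 :=
  stmt_14_general n hn
end
end
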